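/- arXiv:2412.00398 — 8 statements merged into one kernel-verified Lean document; each statement's English description precedes it below -/
import Mathlib

section
/- Let k be a finitely generated field and let G be a countable abelian group such that char k ∉ Sp(G). If the group algebra kG possesses a faithful maximal ideal which is finitely generated as an ideal, then G has finite total rank. -/
universe u v w

/-- A field is finitely generated (over its prime subfield). -/
def IsFGField (k : Type*) [Field k] : Prop :=
  ∃ s : Finset k, Subfield.closure (s : Set k) = ⊤

/-- The subgroup of elements of `p`-power order in an abelian group. -/
def primaryPart (A : Type*) [CommGroup A] (p : ℕ) : Subgroup A where
  carrier := {x | ∃ n : ℕ, x ^ p ^ n = 1}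
  one_mem' := ⟨0, one_pow _⟩
  mul_mem' := by
    rintro a b ⟨n, hn⟩ ⟨m, hm⟩
    refine ⟨n + m, ?_⟩
    rw [mul_pow, pow_add, pow_mul, hn, one_pow, one_mul, Nat.mul_comm, pow_mul, hm, one_pow]
  inv_mem' := by
    rintro a ⟨n, hn⟩
    exact ⟨n, by rw [inv_pow, hn, inv_one]⟩

/-- A group has finite Prüfer rank: there is `m` such that every finitely generated
subgroup can be generated by at most `m` elements. -/
def HasFinitePruferRank (G : Type*) [Group G] : Prop :=
  ∃ m : ℕ, ∀ H : Subgroup G, H.FG →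
    ∃ s : Finset G, ↑s ⊆ (H : Set G) ∧ s.card ≤ m ∧ Subgroup.closure (s : Set G) = H

/-- An abelian group has finite total rank. -/
def FiniteTotalRank (A : Type*) [CommGroup A] : Prop :=
  HasFinitePruferRank (A ⧸ CommGroup.torsion A) ∧
  {p : ℕ | p.Prime ∧ primaryPart A p ≠ ⊥}.Finite ∧
  ∀ p : ℕ, p.Prime → HasFinitePruferRank (primaryPart A p)

/-- `G` has an infinite `p`-section: subgroups `K ⊴ H ≤ G` with `H/K` an infinite `p`-group. -/
def HasInfinitePSection (G : Type*) [Group G] (p : ℕ) : Prop :=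
  ∃ (H : Subgroup G) (K : Subgroup ↥H) (_ : K.Normal),
    Infinite (↥H ⧸ K) ∧ ∀ x : ↥H ⧸ K, ∃ n : ℕ, x ^ p ^ n = 1

/-- `char k ∉ Sp(G)`: the characteristic of `k` is zero or a prime `p` such that `G`
has no infinite `p`-section. -/
def CharNotInSp (k : Type*) [Field k] (G : Type*) [Group G] : Prop :=
  ∀ p : ℕ, p.Prime → ringChar k = p → ¬ HasInfinitePSection G p

/-- A quasicyclic (Prüfer) group: an infinite locally cyclic `p`-group for some prime `p`. -/
def IsQuasicyclic (Q : Type*) [Group Q] : Prop :=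
  Infinite Q ∧ ∃ p : ℕ, p.Prime ∧ (∀ x : Q, ∃ n : ℕ, x ^ p ^ n = 1) ∧
    ∀ s : Finset Q, ∃ g : Q, Subgroup.closure (s : Set Q) = Subgroup.zpowers g

/-- A minimax group: it has a finite chain `⊥ = c 0 ≤ ⋯ ≤ c n = ⊤` of subgroups, each
normal in the next, all whose factors are cyclic or quasicyclic. -/
def IsMinimax (G : Type u) [Group G] : Prop :=
  ∃ (n : ℕ) (c : Fin (n + 1) → Subgroup G), c 0 = ⊥ ∧ c (Fin.last n) = ⊤ ∧
    (∀ i : Fin n, c i.castSucc ≤ c i.succ) ∧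
    ∀ i : Fin n, ∃ (A : Type u) (_ : Group A) (f : ↥(c i.succ) →* A),
      Function.Surjective f ∧ f.ker = (c i.castSucc).subgroupOf (c i.succ) ∧
      (IsCyclic A ∨ IsQuasicyclic A)

/-- A soluble FATR-group: it has a finite chain `⊥ = c 0 ≤ ⋯ ≤ c n = ⊤` of subgroups, each
normal in the next, all whose factors are abelian of finite total rank. -/
def IsFATRGroup (G : Type u) [Group G] : Prop :=
  ∃ (n : ℕ) (c : Fin (n + 1) → Subgroup G), c 0 = ⊥ ∧ c (Fin.last n) = ⊤ ∧
    (∀ i : Fin n, c i.castSucc ≤ c i.succ) ∧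
    ∀ i : Fin n, ∃ (A : Type u) (_ : CommGroup A) (f : ↥(c i.succ) →* A),
      Function.Surjective f ∧ f.ker = (c i.castSucc).subgroupOf (c i.succ) ∧
      FiniteTotalRank A

/-- Multiplication by a group element as a `k`-linear map on a `kG`-module. -/
noncomputable def gSmul (k : Type*) [Field k] {G : Type*} [Group G] (M : Type*) [AddCommGroup M]
    [Module (MonoidAlgebra k G) M] [Module k M] [IsScalarTower k (MonoidAlgebra k G) M]
    (g : G) : M →ₗ[k] M where
  toFun m := MonoidAlgebra.of k G g • m
  map_add' x y := smul_add _ x y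
  map_smul' c m := by
    simp only [RingHom.id_apply]
    rw [← algebraMap_smul (MonoidAlgebra k G) c m, ← mul_smul,
      ← Algebra.commutes c (MonoidAlgebra.of k G g), mul_smul, algebraMap_smul]

/-- `V` (a `kN`-invariant subspace of `M`) is induced from the `kH`-subspace `W`, where
`H ≤ N`: `V` is the internal direct sum `⊕_{t ∈ T} t • W` over a transversal `T ⊆ N`
of `H` in `N`. -/
def IsInducedFromSub (k : Type*) [Field k] {G : Type*} [Group G] (M : Type*) [AddCommGroup M]
    [Module (MonoidAlgebra k G) M] [Module k M] [IsScalarTower k (MonoidAlgebra k G) M]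
    (N : Subgroup G) (V : Submodule k M) (H : Subgroup G) (W : Submodule k M) : Prop :=
  H ≤ N ∧ W ≤ V ∧
  (∀ h ∈ H, ∀ w ∈ W, MonoidAlgebra.of k G h • w ∈ W) ∧
  ∃ T : Set G, T ⊆ (N : Set G) ∧
    (∀ g ∈ N, ∃! t, t ∈ T ∧ t⁻¹ * g ∈ H) ∧
    iSupIndep (fun t : T => W.map (gSmul k M (t : G))) ∧
    (⨆ t : T, W.map (gSmul k M (t : G))) = V

/-- The `kG`-module `M` is induced from the `kH`-subspace `U`. -/
def IsInducedFrom (k : Type*) [Field k] {G : Type*} [Group G] (M : Type*) [AddCommGroup M]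
    [Module (MonoidAlgebra k G) M] [Module k M] [IsScalarTower k (MonoidAlgebra k G) M]
    (H : Subgroup G) (U : Submodule k M) : Prop :=
  IsInducedFromSub k M ⊤ ⊤ H U

/-- The kernel of the action of a subgroup `N` on a subspace `V` of a `kG`-module. -/
noncomputable def moduleKer (k : Type*) [Field k] {G : Type*} [Group G] (M : Type*)
    [AddCommGroup M] [Module (MonoidAlgebra k G) M] [Module k M]
    [IsScalarTower k (MonoidAlgebra k G) M]
    (N : Subgroup G) (V : Submodule k M) : Subgroup N where
  carrier := {g | ∀ v ∈ V, MonoidAlgebra.of k G (g : G) • v = v}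
  one_mem' := by
    intro v _
    show MonoidAlgebra.of k G ((1 : N) : G) • v = v
    rw [OneMemClass.coe_one, map_one, one_smul]
  mul_mem' := by
    intro a b ha hb v hv
    show MonoidAlgebra.of k G ((a * b : N) : G) • v = v
    have : ((a * b : N) : G) = (a : G) * (b : G) := rfl
    rw [this, map_mul, mul_smul, hb v hv, ha v hv]
  inv_mem' := by
    intro a ha v hv
    show MonoidAlgebra.of k G ((a⁻¹ : N) : G) • v = v
    have h1 : MonoidAlgebra.of k G ((a : G)⁻¹ * (a : G)) • v = v := by
      rw [inv_mul_cancel, map_one, one_smul]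
    rw [map_mul, mul_smul, ha v hv] at h1
    exact h1

/-!
Let `P` be generated by `f₁, …, fₙ` and let `H` be the finitely generated subgroup generated by
their supports. As the generators lie in `kH`, the projection of `kG` onto the elements supported
on one coset of `H` maps `P` into itself; in particular no element whose `H`-component is `1`
lies in `P`. If `g` has prime order `p` and `g ∉ H`, then `(1 + g + ⋯ + g ^ (p - 1)) (g - 1) = 0`
with `g - 1 ∉ P` by faithfulness, so the geometric sum lies in `P`; but its `H`-component is `1`.
If `gH` had infinite order, then `1 + g ∉ P` has an inverse `v` modulo the maximal ideal `P`, and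
projecting `(1 + g) v ≡ 1` onto the cosets `g ^ n H` gives a recursion that forces `1 ∈ P`; so
`G / H` is torsion.

Consequently `G / t(G)` is torsion over the finitely generated image of `H`, which bounds the
ranks of its finitely generated subgroups; every prime `p` with `G_p ≠ 1` is the order of one of
the finitely many torsion elements of `H`; and each `G_p` embeds into the multiplicative group of
the field `kG / P`, so its finitely generated subgroups are finite, hence cyclic.
-/

theorem hasFinitePruferRank_of_forall_rank_le {Γ : Type*} [Group Γ] (m : ℕ)
    (h : ∀ (W : Subgroup Γ) [Group.FG W], Group.rank W ≤ m) : HasFinitePruferRank Γ := by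
  classical
  refine ⟨m, fun W hW => ?_⟩
  have := (Group.fg_iff_subgroup_fg W).mpr hW
  obtain ⟨T, hcard, hT⟩ := Group.rank_spec W
  refine ⟨T.image (↑), fun _ hx => ?_, Finset.card_image_le.trans (hcard ▸ h W), ?_⟩
  · obtain ⟨x, -, rfl⟩ := Finset.mem_image.mp hx
    exact x.2
  · rw [Finset.coe_image, ← Subgroup.coe_subtype, ← MonoidHom.map_closure, hT,
      ← MonoidHom.range_eq_map, Subgroup.range_subtype]

theorem Group.rank_le_one_of_isCyclic {A : Type*} [Group A] [Group.FG A] [IsCyclic A] :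
    Group.rank A ≤ 1 := by
  classical
  obtain ⟨g, hg⟩ := IsCyclic.exists_generator (α := A)
  refine (Group.rank_le (S := {g}) ?_).trans_eq (Finset.card_singleton g)
  rw [Finset.coe_singleton, ← Subgroup.zpowers_eq_closure, eq_top_iff]
  exact fun x _ => hg x

theorem Group.rank_le_finrank {A : Type*} [CommGroup A] [Group.FG A] [IsMulTorsionFree A] :
    Group.rank A ≤ Module.finrank ℤ (Additive A) := by
  classical
  let b := Module.Free.chooseBasis ℤ (Additive A)
  let T : Finset A := Finset.univ.image fun i => (b i).toMul
  have hgen : Subgroup.closure (T : Set A) = ⊤ := by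
    refine eq_top_iff.mpr fun x _ => ?_
    have hx := congrArg Additive.toMul (b.sum_repr (.ofMul x))
    simp only [toMul_sum, toMul_zsmul, toMul_ofMul] at hx
    rw [← hx]
    exact Subgroup.prod_mem _ fun i _ =>
      Subgroup.zpow_mem _ (Subgroup.subset_closure (by simp [T])) _
  calc Group.rank A ≤ _ := Group.rank_le hgen
    _ ≤ Fintype.card (Module.Free.ChooseBasisIndex ℤ (Additive A)) := Finset.card_image_le
    _ = _ := (Module.finrank_eq_card_chooseBasisIndex ℤ _).symm

theorem Subgroup.exists_le_comap_pow_of_fg {Γ : Type*} [CommGroup Γ] (B : Subgroup Γ)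
    (hB : ∀ x : Γ, ∃ n, 0 < n ∧ x ^ n ∈ B) {W : Subgroup Γ} (hW : W.FG) :
    ∃ e, 0 < e ∧ W ≤ B.comap (powMonoidHom e) := by
  obtain ⟨t, rfl⟩ := hW
  choose n hn hnB using hB
  refine ⟨∏ x ∈ t, n x, Finset.prod_pos fun x _ => hn x, (Subgroup.closure_le _).mpr fun x hx => ?_⟩
  obtain ⟨d, hd⟩ := Finset.dvd_prod_of_mem n hx
  simpa [hd, pow_mul] using pow_mem (hnB x) d

theorem hasFinitePruferRank_of_fg_of_forall_pow_mem {Γ : Type*} [CommGroup Γ] [IsMulTorsionFree Γ]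
    (B : Subgroup Γ) [Group.FG B] (hB : ∀ x : Γ, ∃ n, 0 < n ∧ x ^ n ∈ B) :
    HasFinitePruferRank Γ := by
  refine hasFinitePruferRank_of_forall_rank_le (Module.finrank ℤ (Additive B)) fun W _ => ?_
  obtain ⟨e, he, hWB⟩ := B.exists_le_comap_pow_of_fg hB ((Group.fg_iff_subgroup_fg W).mp ‹_›)
  let f : W →* B := ((powMonoidHom e).comp W.subtype).codRestrict B fun x => hWB x.2
  have hf : Function.Injective f := fun x y hxy =>
    Subtype.ext (pow_left_injective he.ne' (congrArg Subtype.val hxy))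
  calc Group.rank W ≤ Module.finrank ℤ (Additive W) := Group.rank_le_finrank
    _ ≤ Module.finrank ℤ (Additive B) :=
      LinearMap.finrank_le_finrank_of_injective (f := (MonoidHom.toAdditive f).toIntLinearMap) hf

theorem hasFinitePruferRank_quotient_torsion_of_fg {G : Type*} [CommGroup G] (H : Subgroup G)
    [Group.FG H] (hH : ∀ g : G, ∃ n, 0 < n ∧ g ^ n ∈ H) :
    HasFinitePruferRank (G ⧸ CommGroup.torsion G) := by
  let B := H.map (QuotientGroup.mk' (CommGroup.torsion G))
  have : Group.FG B := Group.fg_of_surjective ((QuotientGroup.mk' _).subgroupMap_surjective H)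
  refine hasFinitePruferRank_of_fg_of_forall_pow_mem B fun x => ?_
  obtain ⟨g, rfl⟩ := QuotientGroup.mk_surjective x
  obtain ⟨n, hn, h⟩ := hH g
  exact ⟨n, hn, g ^ n, h, rfl⟩

theorem hasFinitePruferRank_of_injective {A R : Type*} [CommGroup A] [CommRing R] [IsDomain R]
    (hA : IsMulTorsion A) (f : A →* R) (hf : Function.Injective f) : HasFinitePruferRank A :=
  hasFinitePruferRank_of_forall_rank_le 1 fun W _ => by
    have : Finite W := CommGroup.finite_of_fg_isMulTorsion W (hA.subgroup W)
    have : IsCyclic W :=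
      isCyclic_of_injective_ringHom (f.comp W.subtype) (hf.comp Subtype.val_injective)
    exact Group.rank_le_one_of_isCyclic

theorem CommGroup.finite_setOf_isOfFinOrder {A : Type*} [CommGroup A] [Group.FG A] :
    {x : A | IsOfFinOrder x}.Finite := by
  have : Finite (Submodule.torsion ℤ (Additive A)) :=
    Module.finite_of_fg_torsion _ Submodule.torsion_isTorsion
  refine ((Set.toFinite (Submodule.torsion ℤ (Additive A) : Set (Additive A))).preimage
    Additive.ofMul.injective.injOn).subset fun x hx => ?_
  rw [Set.mem_preimage, SetLike.mem_coe, ← Submodule.mem_toAddSubgroup, Submodule.torsion_int,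
    AddCommGroup.mem_torsion]
  exact isOfFinAddOrder_ofMul_iff.mpr hx

theorem isMulTorsion_primaryPart {G : Type*} [CommGroup G] {p : ℕ} (hp : 0 < p) :
    IsMulTorsion (primaryPart G p) := by
  rintro ⟨x, n, hn⟩
  exact isOfFinOrder_iff_pow_eq_one.mpr ⟨p ^ n, pow_pos hp n, Subtype.ext hn⟩

theorem exists_orderOf_eq_prime_of_primaryPart_ne_bot {G : Type*} [CommGroup G] {p : ℕ}
    (hp : p.Prime) (h : primaryPart G p ≠ ⊥) : ∃ g : G, orderOf g = p := by
  obtain ⟨⟨x, n, hn⟩, hx⟩ := Subgroup.ne_bot_iff_exists_ne_one.mp h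
  obtain ⟨m, -, hm⟩ := (Nat.dvd_prime_pow hp).mp (orderOf_dvd_of_pow_eq_one hn)
  have hm0 : m ≠ 0 := by
    rintro rfl
    exact hx (Subtype.ext (orderOf_eq_one_iff.mp (by rw [hm, pow_zero])))
  exact ⟨x ^ (orderOf x / p),
    orderOf_pow_orderOf_div (by simp [hm, hp.ne_zero]) (hm ▸ dvd_pow_self p hm0)⟩

theorem finite_setOf_prime_primaryPart_ne_bot {G : Type*} [CommGroup G] (H : Subgroup G)
    [Group.FG H] (hH : ∀ g : G, (orderOf g).Prime → g ∈ H) :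
    {p | p.Prime ∧ primaryPart G p ≠ ⊥}.Finite := by
  refine (CommGroup.finite_setOf_isOfFinOrder.image fun x : H => orderOf x).subset ?_
  rintro p ⟨hp, hne⟩
  obtain ⟨g, rfl⟩ := exists_orderOf_eq_prime_of_primaryPart_ne_bot hp hne
  exact ⟨⟨g, hH g hp⟩, orderOf_pos_iff.mp (by simpa using hp.pos), by simp⟩

theorem Ideal.mem_of_add_unit_mul_mem {R : Type*} [Ring R] {I : Ideal R} {u : R} (hu : IsUnit u)
    {c : ℤ → R} (hc : (Function.support c).Finite) (hrel : ∀ n ≠ 0, c n + u * c (n - 1) ∈ I)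
    (n : ℤ) : c n ∈ I := by
  by_contra hn
  have hB : {n | c n ∉ I}.Finite := hc.subset fun m hm h => hm (h ▸ I.zero_mem)
  obtain ⟨m, hm, hmin⟩ := Set.exists_min_image _ id hB ⟨n, hn⟩
  obtain ⟨M, hM, hmax⟩ := Set.exists_max_image _ id hB ⟨n, hn⟩
  -- the least `m` with `c m ∉ I` is `0`; the relation at `M + 1` then puts `c M` into `I`
  have hm0 : m = 0 := by
    by_contra hm0
    have hprev : c (m - 1) ∈ I := by_contra fun h => by have := hmin _ h; simp at this
    exact hm (by simpa using I.sub_mem (hrel m hm0) (I.mul_mem_left u hprev))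
  have hnext : c (M + 1) ∈ I := by_contra fun h => by have := hmax _ h; simp at this
  have hM0 : M + 1 ≠ 0 := by have := hmin M hM; simp at this; omega
  refine hM ((I.unit_mul_mem_iff_mem hu).mp ?_)
  simpa using I.sub_mem (hrel (M + 1) hM0) hnext

namespace MonoidAlgebra

section Semiring

variable {k G Q : Type*} [Semiring k] [Group G] [Group Q] [DecidableEq Q]

theorem exists_fg_subgroup_support_subset (S : Finset k[G]) :
    ∃ H : Subgroup G, H.FG ∧ ∀ f ∈ S, (f.coeff.support : Set G) ⊆ H := by
  classical
  refine ⟨_, ⟨S.biUnion fun f => f.coeff.support, rfl⟩, fun f hf a ha => ?_⟩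
  exact Subgroup.subset_closure (Finset.mem_coe.mpr (Finset.mem_biUnion.mpr ⟨f, hf, ha⟩))

noncomputable def fiberComponent (q : G →* Q) (b : Q) : k[G] →+ k[G] where
  toFun x := ofCoeff (x.coeff.filter (q · = b))
  map_zero' := by simp [Finsupp.filter_zero]
  map_add' x y := by simp [Finsupp.filter_add]

theorem coeff_fiberComponent (q : G →* Q) (b : Q) (x : k[G]) (a : G) :
    (fiberComponent q b x).coeff a = if q a = b then x.coeff a else 0 := by
  simp [fiberComponent, Finsupp.filter_apply]

theorem finite_support_fiberComponent (q : G →* Q) (x : k[G]) :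
    (Function.support fun b => fiberComponent q b x).Finite :=
  (x.coeff.support.finite_toSet.image q).subset fun b hb => by
    obtain ⟨a, ha⟩ := Finsupp.ne_iff.mp (mt coeff_eq_zero.mp hb)
    rw [coeff_fiberComponent, Finsupp.coe_zero, Pi.zero_apply] at ha
    split_ifs at ha with hqa
    exacts [⟨a, Finsupp.mem_support_iff.mpr ha, hqa⟩, absurd rfl ha]

theorem fiberComponent_single (q : G →* Q) (b : Q) (u : G) (r : k) :
    fiberComponent q b (single u r) = if q u = b then single u r else 0 := by
  ext a
  rw [coeff_fiberComponent]
  obtain rfl | hua := eq_or_ne u a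
  · split_ifs <;> simp
  · split_ifs <;> simp [coeff_single, hua]

theorem fiberComponent_of (q : G →* Q) (b : Q) (g : G) :
    fiberComponent q b (of k G g) = if q g = b then of k G g else 0 :=
  fiberComponent_single q b g 1

theorem fiberComponent_one (q : G →* Q) (b : Q) :
    fiberComponent q b (1 : k[G]) = if b = 1 then 1 else 0 := by
  simp only [one_def, fiberComponent_single, map_one, eq_comm]

theorem fiberComponent_single_mul (q : G →* Q) (b : Q) (u : G) (r : k) (x : k[G]) :
    fiberComponent q b (single u r * x) = single u r * fiberComponent q ((q u)⁻¹ * b) x := by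
  ext a
  simp only [coeff_fiberComponent, coeff_single_mul_apply, map_mul, map_inv,
    inv_mul_eq_iff_eq_mul, mul_inv_cancel_left]
  split_ifs <;> simp

theorem fiberComponent_of_mul (q : G →* Q) (b : Q) (g : G) (x : k[G]) :
    fiberComponent q b (of k G g * x) = of k G g * fiberComponent q ((q g)⁻¹ * b) x :=
  fiberComponent_single_mul q b g 1 x

theorem fiberComponent_of_support_subset_ker (q : G →* Q) (b : Q) {f : k[G]}
    (hf : (f.coeff.support : Set G) ⊆ q.ker) : fiberComponent q b f = if b = 1 then f else 0 := by
  ext a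
  have hfa : a ∈ f.coeff.support → q a = 1 := fun ha => MonoidHom.mem_ker.mp (hf ha)
  rw [coeff_fiberComponent]
  by_cases ha : a ∈ f.coeff.support <;> split_ifs <;> simp_all

theorem fiberComponent_mul_of_support_subset_ker (q : G →* Q) (b : Q) (x : k[G]) {f : k[G]}
    (hf : (f.coeff.support : Set G) ⊆ q.ker) :
    fiberComponent q b (x * f) = fiberComponent q b x * f := by
  induction x using induction_linear with
  | zero => simp
  | add x y hx hy => rw [add_mul, map_add, map_add, hx, hy, add_mul]
  | single u r =>
    rw [fiberComponent_single_mul, fiberComponent_of_support_subset_ker q _ hf,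
      fiberComponent_single]
    simp only [inv_mul_eq_one]
    split_ifs <;> simp

theorem fiberComponent_mem_span (q : G →* Q) (b : Q) {S : Set k[G]}
    (hS : ∀ f ∈ S, (f.coeff.support : Set G) ⊆ q.ker) {x : k[G]} (hx : x ∈ Ideal.span S) :
    fiberComponent q b x ∈ Ideal.span S := by
  obtain ⟨n, c, f, rfl⟩ := Submodule.mem_span_set'.mp hx
  rw [map_sum]
  refine Ideal.sum_mem _ fun i _ => ?_
  rw [smul_eq_mul, fiberComponent_mul_of_support_subset_ker q b _ (hS _ (f i).2)]
  exact Ideal.mul_mem_left _ _ (Ideal.subset_span (f i).2)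

theorem notMem_span_of_fiberComponent_eq_one (q : G →* Q) {S : Set k[G]}
    (hS : ∀ f ∈ S, (f.coeff.support : Set G) ⊆ q.ker) (hI : Ideal.span S ≠ ⊤) {x : k[G]}
    (hx : fiberComponent q 1 x = 1) : x ∉ Ideal.span S := fun h =>
  hI ((Ideal.eq_top_iff_one _).mpr (hx ▸ fiberComponent_mem_span q 1 hS h))

end Semiring

section CommRing

variable {k G Q : Type*} [CommRing k] [CommGroup G] [Group Q] [DecidableEq Q]

theorem map_eq_one_of_orderOf_prime (q : G →* Q) {S : Set k[G]}
    (hS : ∀ f ∈ S, (f.coeff.support : Set G) ⊆ q.ker) (hprime : (Ideal.span S).IsPrime)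
    (hfaith : ∀ g : G, of k G g - 1 ∈ Ideal.span S → g = 1)
    {g : G} (hp : (orderOf g).Prime) : q g = 1 := by
  by_contra hqg
  have := Fact.mk hp
  have hord : orderOf (q g) = orderOf g :=
    orderOf_eq_prime (by rw [← map_pow, pow_orderOf_eq_one, map_one]) hqg
  have hgeom : (∑ i ∈ Finset.range (orderOf g), of k G g ^ i) * (of k G g - 1) ∈ Ideal.span S := by
    rw [geom_sum_mul, ← map_pow, pow_orderOf_eq_one, map_one, sub_self]
    exact Ideal.zero_mem _
  -- only the constant term of the geometric sum survives the projection to the fibre of `1`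
  have hcomp : fiberComponent q 1 (∑ i ∈ Finset.range (orderOf g), of k G g ^ i) = 1 := by
    rw [map_sum, Finset.sum_eq_single_of_mem 0 (Finset.mem_range.mpr hp.pos)]
    · rw [pow_zero, fiberComponent_one, if_pos rfl]
    · intro i hi hi0
      rw [← map_pow, fiberComponent_of, if_neg]
      rw [map_pow]
      exact pow_ne_one_of_lt_orderOf hi0 (hord ▸ Finset.mem_range.mp hi)
  rcases hprime.mem_or_mem hgeom with h | h
  · exact notMem_span_of_fiberComponent_eq_one q hS hprime.ne_top hcomp h
  · exact hqg (by rw [hfaith g h, map_one])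

theorem isOfFinOrder_map_of_isMaximal (q : G →* Q) {S : Set k[G]}
    (hS : ∀ f ∈ S, (f.coeff.support : Set G) ⊆ q.ker) (hmax : (Ideal.span S).IsMaximal)
    (g : G) : IsOfFinOrder (q g) := by
  by_contra hg
  have hinj : Function.Injective fun n : ℤ => q g ^ n := injective_zpow_iff_not_isOfFinOrder.mpr hg
  have hq : q g ≠ 1 := fun h => hg (h ▸ IsOfFinOrder.one)
  have hu : fiberComponent q 1 (1 + of k G g) = 1 := by
    rw [map_add, fiberComponent_one, fiberComponent_of, if_pos rfl, if_neg hq, add_zero]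
  obtain ⟨v, w, hw, hvw⟩ :=
    hmax.exists_inv (notMem_span_of_fiberComponent_eq_one q hS hmax.ne_top hu)
  have hv : (1 + of k G g) * v - 1 ∈ Ideal.span S := by
    rw [show (1 + of k G g) * v - 1 = -w by linear_combination hvw]
    exact (Ideal.span S).neg_mem hw
  set c : ℤ → k[G] := fun n => fiberComponent q (q g ^ n) v
  have hrec (n : ℤ) : c n + of k G g * c (n - 1) - (if n = 0 then 1 else 0) ∈ Ideal.span S := by
    have hshift : (q g)⁻¹ * q g ^ n = q g ^ (n - 1) := by group
    have hone : q g ^ n = 1 ↔ n = 0 := by rw [← zpow_zero (q g), hinj.eq_iff]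
    have h := fiberComponent_mem_span q (q g ^ n) hS hv
    rwa [add_mul, one_mul, map_sub, map_add, fiberComponent_of_mul, fiberComponent_one, hshift,
      if_congr hone rfl rfl] at h
  have hmem := Ideal.mem_of_add_unit_mul_mem ((Group.isUnit g).map (of k G))
    ((finite_support_fiberComponent q v).preimage hinj.injOn) fun n hn => by
      simpa [hn] using hrec n
  have h := sub_mem (add_mem (hmem 0) (Ideal.mul_mem_left _ (of k G g) (hmem (0 - 1)))) (hrec 0)
  rw [if_pos rfl, sub_sub_cancel] at h
  exact hmax.ne_top ((Ideal.eq_top_iff_one _).mpr h)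

theorem injective_quotientMk_comp_of {P : Ideal k[G]} (hP : ∀ g : G, of k G g - 1 ∈ P → g = 1) :
    Function.Injective ((Ideal.Quotient.mk P).toMonoidHom.comp (of k G)) := fun a b hab => by
  have hab : of k G a - of k G b ∈ P := Ideal.Quotient.eq.mp hab
  have : of k G (a * b⁻¹) - 1 = (of k G a - of k G b) * of k G b⁻¹ := by
    rw [sub_mul, ← map_mul, ← map_mul, mul_inv_cancel, map_one]
  exact mul_inv_eq_one.mp (hP _ (this ▸ P.mul_mem_right _ hab))

end CommRing

end MonoidAlgebra

theorem stmt_7_general (k : Type*) [Field k]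
    (G : Type*) [CommGroup G]
    (hex : ∃ P : Ideal (MonoidAlgebra k G), P.IsMaximal ∧
      (∀ g : G, MonoidAlgebra.of k G g - 1 ∈ P → g = 1) ∧ P.FG) :
    FiniteTotalRank G := by
  classical
  obtain ⟨P, hmax, hfaith, S, rfl⟩ := hex
  obtain ⟨H, hHfg, hSH⟩ := MonoidAlgebra.exists_fg_subgroup_support_subset S
  have : Group.FG H := (Group.fg_iff_subgroup_fg H).mpr hHfg
  have hS : ∀ f ∈ (S : Set (MonoidAlgebra k G)),
      (f.coeff.support : Set G) ⊆ (QuotientGroup.mk' H).ker := fun f hf => by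
    rw [QuotientGroup.ker_mk']
    exact hSH f hf
  have hprime : ∀ g : G, (orderOf g).Prime → g ∈ H := fun g hg => (QuotientGroup.eq_one_iff g).mp
    (MonoidAlgebra.map_eq_one_of_orderOf_prime _ hS hmax.isPrime hfaith hg)
  have htors : ∀ g : G, ∃ n, 0 < n ∧ g ^ n ∈ H := fun g => by
    obtain ⟨n, hn, h⟩ := (MonoidAlgebra.isOfFinOrder_map_of_isMaximal _ hS hmax g).exists_pow_eq_one
    exact ⟨n, hn, (QuotientGroup.eq_one_iff _).mp (by simpa using h)⟩
  refine ⟨?_, finite_setOf_prime_primaryPart_ne_bot H hprime, fun p hp => ?_⟩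
  · exact hasFinitePruferRank_quotient_torsion_of_fg H htors
  · have := hmax.isPrime
    let φ := (Ideal.Quotient.mk (Ideal.span (S : Set (MonoidAlgebra k G)))).toMonoidHom.comp
      (MonoidAlgebra.of k G)
    exact hasFinitePruferRank_of_injective (isMulTorsion_primaryPart hp.pos)
      (φ.comp (primaryPart G p).subtype)
      ((MonoidAlgebra.injective_quotientMk_comp_of hfaith).comp Subtype.val_injective)

theorem stmt_7 (k : Type*) [Field k] (hk : IsFGField k)
    (G : Type*) [CommGroup G] [Countable G] (hchar : CharNotInSp k G)
    (hex : ∃ P : Ideal (MonoidAlgebra k G), P.IsMaximal ∧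
      (∀ g : G, MonoidAlgebra.of k G g - 1 ∈ P → g = 1) ∧ P.FG) :
    FiniteTotalRank G :=
  stmt_7_general k G hex
end

section
/- Let k be a field and let G be a torsion-free nilpotent group of nilpotency class at most 2. Suppose M is a faithful irreducible kG-module which is induced from an irreducible kN-submodule V of M for some subgroup N of G. Then every torsion element of the quotient group N/ker_N(V) lies in the centre of N/ker_N(V), where ker_N(V) = {g ∈ N : v·g = v for all v ∈ V}. -/
universe u v w

/-- Torsion-free monoid (the definition `Monoid.IsTorsionFree` of Mathlib, Dec. 2024). -/
def Monoid.IsTorsionFree (G : Type*) [Monoid G] : Prop :=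
  ∀ g : G, g ≠ 1 → ¬IsOfFinOrder g

open scoped commutatorElement

/-!
Write `c = ⁅g, h⁆`. Since `c` commutes with `g`, `⁅g ^ n, h⁆ = c ^ n`, and as the
kernel of `N` on `V` is normal in `N`, `c ^ n` acts trivially on `V`. Being central, `c ^ n` then
acts trivially on every translate `t • V`, hence on the module `M` they span, so `c ^ n = 1` by
faithfulness and `c = 1` because `G` is torsion-free.
-/

theorem commutatorElement_pow_left_of_commute {G : Type*} [Group G] {a b : G}
    (h : Commute a ⁅a, b⁆) (n : ℕ) : ⁅a ^ n, b⁆ = ⁅a, b⁆ ^ n := by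
  induction n with
  | zero => rw [pow_zero, pow_zero, commutatorElement_one_left]
  | succ n ih =>
    rw [pow_succ', commutatorElement_mul_left_eq_conj_mul, ih, (h.pow_right n).eq,
      mul_inv_cancel_right, pow_succ]

section ModuleKer

variable {k : Type*} [Field k] {G : Type*} [Group G] {M : Type*} [AddCommGroup M]
  [Module (MonoidAlgebra k G) M] [Module k M] [IsScalarTower k (MonoidAlgebra k G) M]

theorem moduleKer_normal {N : Subgroup G} {V : Submodule k M}
    (hV : ∀ h ∈ N, ∀ v ∈ V, MonoidAlgebra.of k G h • v ∈ V) : (moduleKer k M N V).Normal where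
  conj_mem x hx y v hv := by
    have hyv : MonoidAlgebra.of k G ((y⁻¹ : N) : G) • v ∈ V := hV _ (y⁻¹).2 v hv
    change MonoidAlgebra.of k G ((y : G) * x * (y : G)⁻¹) • v = v
    rw [map_mul, map_mul, mul_smul, mul_smul, ← InvMemClass.coe_inv, hx _ hyv, ← mul_smul,
      ← map_mul, InvMemClass.coe_inv, mul_inv_cancel, map_one, one_smul]

theorem smul_eq_self_of_mem_center_of_iSup_map_gSmul_eq_top {z : G}
    (hz : z ∈ Subgroup.center G) {W : Submodule k M}
    (hW : ∀ w ∈ W, MonoidAlgebra.of k G z • w = w) {ι : Type*} {t : ι → G}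
    (hsup : ⨆ i, W.map (gSmul k M (t i)) = ⊤) (m : M) :
    MonoidAlgebra.of k G z • m = m := by
  suffices (⊤ : Submodule k M) ≤ LinearMap.ker (gSmul k M z - LinearMap.id) by
    exact sub_eq_zero.mp (this (Submodule.mem_top (x := m)))
  rw [← hsup]
  refine iSup_le fun i => ?_
  rintro _ ⟨w, hw, rfl⟩
  change MonoidAlgebra.of k G z • MonoidAlgebra.of k G (t i) • w
    - MonoidAlgebra.of k G (t i) • w = 0
  rw [sub_eq_zero, ← mul_smul, ← map_mul, ← (Subgroup.mem_center_iff.mp hz (t i)), map_mul,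
    mul_smul, hW w hw]

end ModuleKer

theorem stmt_12_general (k : Type*) [Field k] (G : Type*) [Group G]
    (htf : Monoid.IsTorsionFree G)
    (hnil : commutator G ≤ Subgroup.center G)
    (M : Type*) [AddCommGroup M] [Module (MonoidAlgebra k G) M]
    [Module k M] [IsScalarTower k (MonoidAlgebra k G) M]
    (hfaith : ∀ g : G, (∀ m : M, MonoidAlgebra.of k G g • m = m) → g = 1)
    (N : Subgroup G) (V : Submodule k M)
    (hind : IsInducedFrom k M N V) :
    ∀ g : N, (∃ n : ℕ, 0 < n ∧ g ^ n ∈ moduleKer k M N V) →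
      ∀ h : N, ⁅g, h⁆ ∈ moduleKer k M N V := by
  rintro g ⟨n, hn, hgn⟩ h
  obtain ⟨-, -, hNV, T, -, -, -, hsup⟩ := hind
  have : (moduleKer k M N V).Normal := moduleKer_normal hNV
  have hc : ⁅(g : G), (h : G)⁆ ∈ Subgroup.center G :=
    hnil (Subgroup.commutator_mem_commutator (Subgroup.mem_top _) (Subgroup.mem_top _))
  have hcV : ∀ v ∈ V, MonoidAlgebra.of k G (⁅(g : G), (h : G)⁆ ^ n) • v = v := by
    have hker : ⁅g ^ n, h⁆ ∈ moduleKer k M N V := Subgroup.commutator_le_left _ ⊤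
      (Subgroup.commutator_mem_commutator hgn (Subgroup.mem_top h))
    rw [← commutatorElement_pow_left_of_commute (Subgroup.mem_center_iff.mp hc _)]
    exact hker
  have hcn : ⁅(g : G), (h : G)⁆ ^ n = 1 :=
    hfaith _ (smul_eq_self_of_mem_center_of_iSup_map_gSmul_eq_top (pow_mem hc n) hcV hsup)
  have hc1 : ⁅g, h⁆ = 1 := by
    by_contra hne
    exact htf _ (fun h1 => hne (Subtype.ext h1)) (isOfFinOrder_iff_pow_eq_one.mpr ⟨n, hn, hcn⟩)
  exact hc1 ▸ one_mem _

theorem stmt_12 (k : Type*) [Field k] (G : Type*) [Group G]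
    (htf : Monoid.IsTorsionFree G)
    (hnil : commutator G ≤ Subgroup.center G)
    (M : Type*) [AddCommGroup M] [Module (MonoidAlgebra k G) M]
    [Module k M] [IsScalarTower k (MonoidAlgebra k G) M]
    (hfaith : ∀ g : G, (∀ m : M, MonoidAlgebra.of k G g • m = m) → g = 1)
    (hirr : IsSimpleModule (MonoidAlgebra k G) M)
    (N : Subgroup G) (V : Submodule k M)
    (hVne : V ≠ ⊥)
    (hVirr : ∀ W : Submodule k M, W ≤ V →
      (∀ h ∈ N, ∀ w ∈ W, MonoidAlgebra.of k G h • w ∈ W) → W = ⊥ ∨ W = V)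
    (hind : IsInducedFrom k M N V) :
    ∀ g : N, (∃ n : ℕ, 0 < n ∧ g ^ n ∈ moduleKer k M N V) →
      ∀ h : N, ⁅g, h⁆ ∈ moduleKer k M N V :=
  stmt_12_general k G htf hnil M hfaith N V hind
end

section
/- Let G be a nilpotent group of nilpotency class at most 2 such that the torsion subgroup of G is contained in the centre of G, and let G₁ be a subgroup of finite index in G. Let k be a field and let M be a faithful kG-module such that M = M₁·kG (the kG-submodule generated by M₁ is all of M) for some kG₁-submodule M₁ of M. Then M₁ is a faithful kG₁-module, i.e. the only element of G₁ acting as the identity on M₁ is the identity. -/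
universe u v w

/-!
Let `g ∈ G₁` act trivially on `M₁`. A central element of `G` acting trivially on `M₁` acts
trivially on `M₁ · kG = M`, so it is `1` by faithfulness. For `x ∈ G₁` the commutator `⁅g, x⁆` is
central (class two) and acts trivially on `M₁`, so `G₁` centralises `g`. In a group of class two,
`x ↦ ⁅g, x⁆` is a homomorphism with kernel the centraliser of `g`; if that has finite index `n`,
then `⁅gⁿ, x⁆ = ⁅g, xⁿ⁆ = 1`, so `gⁿ` is central, hence `gⁿ = 1`. Thus `g` is torsion, hence
central, hence `g = 1`.
-/

open Subgroup MonoidAlgebra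
open scoped commutatorElement

section ClassTwo

variable {G : Type*} [Group G]

theorem commutatorElement_mem_center (hG : commutator G ≤ center G) (g x : G) :
    ⁅g, x⁆ ∈ center G :=
  hG (commutator_mem_commutator (mem_top g) (mem_top x))

theorem commutatorElement_mul_right (hG : commutator G ≤ center G) (g x y : G) :
    ⁅g, x * y⁆ = ⁅g, x⁆ * ⁅g, y⁆ := by
  have hy : x⁻¹ * ⁅g, y⁆ = ⁅g, y⁆ * x⁻¹ :=
    mem_center_iff.mp (commutatorElement_mem_center hG g y) x⁻¹
  calc ⁅g, x * y⁆ = g * x * g⁻¹ * ⁅g, y⁆ * x⁻¹ := by simp only [commutatorElement_def]; group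
    _ = ⁅g, x⁆ * ⁅g, y⁆ := by rw [mul_assoc _ ⁅g, y⁆, ← hy, commutatorElement_def]; group

def commutatorElementHom (hG : commutator G ≤ center G) (g : G) : G →* G where
  toFun x := ⁅g, x⁆
  map_one' := commutatorElement_one_right g
  map_mul' := commutatorElement_mul_right hG g

theorem ker_commutatorElementHom (hG : commutator G ≤ center G) (g : G) :
    (commutatorElementHom hG g).ker = centralizer {g} := by
  ext x
  rw [MonoidHom.mem_ker, mem_centralizer_singleton_iff, eq_comm (a := x * g)]
  exact commutatorElement_eq_one_iff_commute

theorem commutatorElement_pow_left (hG : commutator G ≤ center G) (g x : G) (n : ℕ) :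
    ⁅g ^ n, x⁆ = ⁅g, x⁆ ^ n := by
  rw [← commutatorElement_inv, ← commutatorElement_inv x g, inv_pow]
  exact congrArg _ (map_pow (commutatorElementHom hG x) g n)

theorem pow_index_centralizer_mem_center (hG : commutator G ≤ center G) (g : G) :
    g ^ (centralizer {g}).index ∈ center G := by
  rw [mem_center_iff]
  intro x
  have hx : x ^ (centralizer {g}).index ∈ (commutatorElementHom hG g).ker := by
    simpa only [ker_commutatorElementHom] using pow_index_mem (commutatorElementHom hG g).ker x
  have hcomm : ⁅g ^ (centralizer {g}).index, x⁆ = 1 := by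
    rw [commutatorElement_pow_left hG]
    exact (map_pow (commutatorElementHom hG g) x _).symm.trans hx
  exact (commutatorElement_eq_one_iff_commute.mp hcomm).eq.symm

end ClassTwo

theorem smul_eq_self_of_span_eq_top {A M : Type*} [Semiring A] [AddCommMonoid M] [Module A M]
    {a : A} (ha : ∀ r, Commute a r) {s : Set M} (hs : Submodule.span A s = ⊤)
    (h : ∀ m ∈ s, a • m = m) (m : M) : a • m = m := by
  induction (hs ▸ Submodule.mem_top : m ∈ Submodule.span A s) using Submodule.span_induction with
  | mem x hx => exact h x hx
  | zero => exact smul_zero a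
  | add x y _ _ hx hy => rw [smul_add, hx, hy]
  | smul r x _ hx => rw [smul_smul, (ha r).eq, mul_smul, hx]

section GroupAlgebraModule

variable {k G M : Type*} [Semiring k] [Group G] [AddCommMonoid M] [Module (MonoidAlgebra k G) M]

theorem of_inv_smul_eq_self {g : G} {m : M} (h : of k G g • m = m) : of k G g⁻¹ • m = m := by
  conv_lhs => rw [← h]
  rw [← mul_smul, ← map_mul, inv_mul_cancel, map_one, one_smul]

theorem of_pow_smul_eq_self {g : G} {m : M} (h : of k G g • m = m) (n : ℕ) :
    of k G (g ^ n) • m = m := by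
  rw [map_pow]
  exact (MulAction.stabilizerSubmonoid (MonoidAlgebra k G) m).pow_mem h n

theorem of_commutatorElement_smul_eq_self {S : Set M} {g x : G}
    (hg : ∀ m ∈ S, of k G g • m = m) (hx : ∀ m ∈ S, of k G x⁻¹ • m ∈ S) {m : M} (hm : m ∈ S) :
    of k G ⁅g, x⁆ • m = m := by
  have hx' : of k G x • of k G x⁻¹ • m = m := by
    rw [← mul_smul, ← map_mul, mul_inv_cancel, map_one, one_smul]
  rw [commutatorElement_def, map_mul, map_mul, map_mul, mul_smul, mul_smul, mul_smul,
    of_inv_smul_eq_self (hg _ (hx m hm)), hx', hg m hm]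

theorem eq_one_of_mem_center_of_smul_eq_self
    (hfaith : ∀ g : G, (∀ m : M, of k G g • m = m) → g = 1) {S : Set M}
    (hS : Submodule.span (MonoidAlgebra k G) S = ⊤) {z : G} (hz : z ∈ center G)
    (h : ∀ m ∈ S, of k G z • m = m) : z = 1 :=
  hfaith z <| smul_eq_self_of_span_eq_top
    (of_commute fun g => (mem_center_iff.mp hz g).symm) hS h

end GroupAlgebraModule

theorem stmt_13_general (k : Type*) [Field k] (G : Type*) [Group G]
    (hnil : commutator G ≤ Subgroup.center G)
    (htor : ∀ g : G, IsOfFinOrder g → g ∈ Subgroup.center G)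
    (G₁ : Subgroup G) (hfi : G₁.index ≠ 0)
    (M : Type*) [AddCommGroup M] [Module (MonoidAlgebra k G) M]
    [Module k M]
    (hfaith : ∀ g : G, (∀ m : M, MonoidAlgebra.of k G g • m = m) → g = 1)
    (M₁ : Submodule k M)
    (hsub : ∀ h ∈ G₁, ∀ m ∈ M₁, MonoidAlgebra.of k G h • m ∈ M₁)
    (hgen : Submodule.span (MonoidAlgebra k G) (M₁ : Set M) = ⊤) :
    ∀ g ∈ G₁, (∀ m ∈ M₁, MonoidAlgebra.of k G g • m = m) → g = 1 := by
  intro g _ hgM₁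
  have central_eq_one : ∀ {z}, z ∈ center G → (∀ m ∈ M₁, of k G z • m = m) → z = 1 :=
    eq_one_of_mem_center_of_smul_eq_self hfaith hgen
  have hG₁ : G₁ ≤ centralizer {g} := fun x hx =>
    (ker_commutatorElementHom hnil g).le <| central_eq_one (commutatorElement_mem_center hnil g x)
      fun _ => of_commutatorElement_smul_eq_self hgM₁ (hsub _ (inv_mem hx))
  have hn : (centralizer {g}).index ≠ 0 := ne_zero_of_dvd_ne_zero hfi (index_dvd_of_le hG₁)
  have hgn : g ^ (centralizer {g}).index = 1 :=
    central_eq_one (pow_index_centralizer_mem_center hnil g)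
      fun m hm => of_pow_smul_eq_self (hgM₁ m hm) _
  exact central_eq_one (htor g (isOfFinOrder_iff_pow_eq_one.mpr ⟨_, Nat.pos_of_ne_zero hn, hgn⟩))
    hgM₁

theorem stmt_13 (k : Type*) [Field k] (G : Type*) [Group G]
    (hnil : commutator G ≤ Subgroup.center G)
    (htor : ∀ g : G, IsOfFinOrder g → g ∈ Subgroup.center G)
    (G₁ : Subgroup G) (hfi : G₁.index ≠ 0)
    (M : Type*) [AddCommGroup M] [Module (MonoidAlgebra k G) M]
    [Module k M] [IsScalarTower k (MonoidAlgebra k G) M]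
    (hfaith : ∀ g : G, (∀ m : M, MonoidAlgebra.of k G g • m = m) → g = 1)
    (M₁ : Submodule k M)
    (hsub : ∀ h ∈ G₁, ∀ m ∈ M₁, MonoidAlgebra.of k G h • m ∈ M₁)
    (hgen : Submodule.span (MonoidAlgebra k G) (M₁ : Set M) = ⊤) :
    ∀ g ∈ G₁, (∀ m ∈ M₁, MonoidAlgebra.of k G g • m = m) → g = 1 :=
  stmt_13_general k G hnil htor G₁ hfi M hfaith M₁ hsub hgen
end

section
/- Let G be an abelian group, H a dense subgroup of G, and k a field. Then the group algebra kG is integral over the subalgebra kH, and a prime ideal P of kG is a maximal ideal if and only if P ∩ kH is a maximal ideal of kH. -/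
universe u v w

/-!
Every `g ∈ G` is a root of the monic polynomial `X ^ n - g ^ n` over `kH`, where `g ^ n ∈ H`,
so `kG`, being spanned by `G` over `k`, is integral over `kH`. For an integral extension a prime
ideal is maximal exactly when its contraction is (Cohen–Seidenberg).
-/

namespace MonoidAlgebra

variable {R : Type*} [CommRing R] {M G : Type*} [CommMonoid M] [CommMonoid G]

lemma isIntegralElem_of_pow_mem_mrange {φ : M →* G} {g : G} {n : ℕ} (hn : 0 < n)
    (hg : g ^ n ∈ MonoidHom.mrange φ) : (mapDomainRingHom R φ).IsIntegralElem (of R G g) := by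
  obtain ⟨m, hm⟩ := hg
  refine ⟨Polynomial.X ^ n - Polynomial.C (of R M m), Polynomial.monic_X_pow_sub_C _ hn.ne', ?_⟩
  simp [of_apply, hm, single_pow]

lemma mapDomainRingHom_isIntegral {φ : M →* G}
    (hφ : ∀ g : G, ∃ n : ℕ, 0 < n ∧ g ^ n ∈ MonoidHom.mrange φ) :
    (mapDomainRingHom R φ).IsIntegral := by
  intro x
  induction x using MonoidAlgebra.induction_on with
  | of g =>
    obtain ⟨n, hn, hg⟩ := hφ g
    exact isIntegralElem_of_pow_mem_mrange hn hg
  | add x y hx hy => exact hx.add _ hy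
  | smul r x hx =>
    have hr : r • x = mapDomainRingHom R φ (algebraMap R R[M] r) * x := by
      rw [← RingHom.comp_apply, mapDomainRingHom_comp_algebraMap, Algebra.smul_def]
    rw [hr]
    exact (RingHom.isIntegralElem_map _).mul _ hx

end MonoidAlgebra

lemma Ideal.isMaximal_iff_isMaximal_comap_of_isIntegral {R S : Type*} [CommRing R] [CommRing S]
    {f : R →+* S} (hf : f.IsIntegral) (P : Ideal S) [P.IsPrime] :
    P.IsMaximal ↔ (P.comap f).IsMaximal :=
  ⟨fun _ ↦ isMaximal_comap_of_isIntegral_of_isMaximal' f hf P,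
    isMaximal_of_isIntegral_of_isMaximal_comap' f hf P⟩

theorem stmt_14 (k : Type*) [Field k] (G : Type*) [CommGroup G] (H : Subgroup G)
    (hdense : ∀ g : G, ∃ n : ℕ, 0 < n ∧ g ^ n ∈ H) :
    (MonoidAlgebra.mapDomainRingHom k H.subtype).IsIntegral ∧
    ∀ P : Ideal (MonoidAlgebra k G), P.IsPrime →
      (P.IsMaximal ↔
        (Ideal.comap (MonoidAlgebra.mapDomainRingHom k H.subtype) P).IsMaximal) := by
  have hint : (MonoidAlgebra.mapDomainRingHom k H.subtype).IsIntegral :=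
    MonoidAlgebra.mapDomainRingHom_isIntegral fun g ↦
      let ⟨n, hn, hg⟩ := hdense g
      ⟨n, hn, ⟨⟨g ^ n, hg⟩, rfl⟩⟩
  exact ⟨hint, fun P _ ↦ Ideal.isMaximal_iff_isMaximal_comap_of_isIntegral hint P⟩
end

section
/- Let G be an abelian group, H a dense subgroup of G, and k a field. If P and P₁ are ideals of the group algebra kG with P prime, P ⊆ P₁, and P ∩ kH = P₁ ∩ kH, then P = P₁. -/
/-
Since `H` is dense and `G` is abelian, every `single g c` has a power `single (g ^ n) (c ^ n)`
lying in `kH`, so `kG` is integral over `kH`; in an integral extension there are no proper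
inclusions between primes lying over the same prime (incomparability).
-/

universe u v w

theorem RingHom.IsIntegral.eq_of_le_of_comap_eq {R S : Type*} [CommRing R] [CommRing S]
    {f : R →+* S} (hf : f.IsIntegral) {P Q : Ideal S} [P.IsPrime] (hPQ : P ≤ Q)
    (h : P.comap f = Q.comap f) : P = Q := by
  let _ := f.toAlgebra
  have : Algebra.IsIntegral R S := ⟨hf⟩
  by_contra hne
  exact (Ideal.IsIntegral.comap_lt_comap (R := R) (hPQ.lt_of_ne hne)).ne h

namespace MonoidAlgebra

variable {k M G : Type*} [CommRing k] [CommMonoid M] [CommMonoid G]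

theorem isIntegralElem_mapDomainRingHom_single (φ : M →* G) {g : G} {n : ℕ} (hn : 0 < n)
    (hg : g ^ n ∈ Set.range φ) (c : k) :
    (mapDomainRingHom k φ).IsIntegralElem (single g c) := by
  let _ := (mapDomainRingHom k φ).toAlgebra
  obtain ⟨m, hm⟩ := hg
  have hpow : single g c ^ n = mapDomainRingHom k φ (single m (c ^ n)) := by
    rw [single_pow, mapDomainRingHom_apply, mapDomain_single, hm]
  exact IsIntegral.of_pow hn (hpow ▸ (mapDomainRingHom k φ).isIntegralElem_map)

theorem isIntegral_mapDomainRingHom (φ : M →* G)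
    (hφ : ∀ g : G, ∃ n, 0 < n ∧ g ^ n ∈ Set.range φ) :
    (mapDomainRingHom k φ).IsIntegral := fun x ↦ by
  induction x using induction_linear with
  | zero => exact (mapDomainRingHom k φ).isIntegralElem_zero
  | add x y hx hy => exact RingHom.IsIntegralElem.add _ hx hy
  | single g c =>
    obtain ⟨n, hn, hg⟩ := hφ g
    exact isIntegralElem_mapDomainRingHom_single φ hn hg c

end MonoidAlgebra

theorem stmt_15 (k : Type*) [Field k] (G : Type*) [CommGroup G] (H : Subgroup G)
    (hdense : ∀ g : G, ∃ n : ℕ, 0 < n ∧ g ^ n ∈ H)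
    (P P₁ : Ideal (MonoidAlgebra k G)) (hP : P.IsPrime) (hle : P ≤ P₁)
    (hcap : Ideal.comap (MonoidAlgebra.mapDomainRingHom k H.subtype) P =
      Ideal.comap (MonoidAlgebra.mapDomainRingHom k H.subtype) P₁) :
    P = P₁ := by
  have hintegral : (MonoidAlgebra.mapDomainRingHom k H.subtype).IsIntegral :=
    MonoidAlgebra.isIntegral_mapDomainRingHom _ fun g ↦ by simpa using hdense g
  exact hintegral.eq_of_le_of_comap_eq hle hcap
end

section
/- Let k be a field, G an abelian group, and H a subgroup of G. Let I be a proper ideal of the group algebra kG such that I = (I ∩ kH)·kG (the ideal of kG generated by I ∩ kH). If X is a subgroup of G with X ∩ H = 1, then kX ∩ I = 0, and consequently the quotient ring kG/I contains a subring isomorphic to kX. -/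
universe u v w

/-! Reading off the coefficients on a left coset `gH` gives a map `kG → kH` that commutes with
right multiplication by `kH`; since `I` is generated by `I ∩ kH`, it maps `I` into `I ∩ kH`.
When `X ∩ H = 1`, distinct elements of `X` lie in distinct cosets of `H`, so for `a ∈ kX ∩ I` and
`x ∈ X` the component of `a` on `xH` is the scalar `a_x`, which lies in the proper ideal `I ∩ kH`
and therefore vanishes. -/

namespace MonoidAlgebra

section Semiring

variable {k G : Type*} [Semiring k] [Group G] (H : Subgroup G)

/-- The coefficients on the left coset `g H`, re-indexed by `H`. -/
noncomputable def cosetComponent (g : G) : MonoidAlgebra k G →+ MonoidAlgebra k H :=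
  comapDomainAddMonoidHom (fun h : H => g * h) ((mul_right_injective g).comp Subtype.val_injective)

theorem coeff_cosetComponent (g : G) (x : MonoidAlgebra k G) (h : H) :
    (cosetComponent H g x).coeff h = x.coeff (g * h) := by
  simp [cosetComponent]

theorem cosetComponent_mul_mapDomain (g : G) (x : MonoidAlgebra k G) (b : MonoidAlgebra k H) :
    cosetComponent H g (x * mapDomainRingHom k H.subtype b) = cosetComponent H g x * b := by
  induction b using MonoidAlgebra.induction with
  | zero => simp
  | single_add h d b _ _ ih =>
    rw [map_add, mul_add, map_add, ih, mul_add]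
    congr 1
    ext h'
    simp [coeff_cosetComponent, mapDomain_single, mul_assoc]

variable {H}

theorem cosetComponent_mem_comap {I : Ideal (MonoidAlgebra k G)}
    (hI : Ideal.map (mapDomainRingHom k H.subtype) (I.comap (mapDomainRingHom k H.subtype)) = I)
    {y : MonoidAlgebra k G} (hy : y ∈ I) (g : G) :
    cosetComponent H g y ∈ I.comap (mapDomainRingHom k H.subtype) := by
  rw [← hI, Ideal.map, Submodule.mem_span_set] at hy
  obtain ⟨c, hc, rfl⟩ := hy
  rw [Finsupp.sum, map_sum]
  refine Ideal.sum_mem _ fun z hz => ?_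
  obtain ⟨b, hb, rfl⟩ := hc hz
  rw [smul_eq_mul, cosetComponent_mul_mapDomain]
  exact Ideal.mul_mem_left _ _ hb

theorem cosetComponent_mapDomain_of_inf_eq_bot {X : Subgroup G} (hX : X ⊓ H = ⊥)
    (a : MonoidAlgebra k X) (x : X) :
    cosetComponent H x (mapDomainRingHom k X.subtype a) = single 1 (a.coeff x) := by
  ext h
  rw [coeff_cosetComponent]
  by_cases hxh : (x : G) * h ∈ X
  · have hh : (h : G) ∈ X ⊓ H := ⟨by simpa using X.mul_mem (X.inv_mem x.2) hxh, h.2⟩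
    obtain rfl : h = 1 := Subtype.ext (by rwa [hX, Subgroup.mem_bot] at hh)
    simp [Finsupp.mapDomain_apply Subtype.val_injective]
  · have hh : h ≠ 1 := by rintro rfl; simp at hxh
    simp only [mapDomainRingHom_apply, Subgroup.coe_subtype, coeff_mapDomain, coeff_single,
      Finsupp.single_eq_of_ne hh]
    exact Finsupp.mapDomain_of_notMem_range _ _ (by rwa [Subtype.range_coe])

end Semiring

section DivisionRing

variable {k G : Type*} [DivisionRing k] [Group G]

theorem eq_top_of_single_one_mem {J : Ideal (MonoidAlgebra k G)} {c : k} (hc : c ≠ 0)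
    (hJ : single 1 c ∈ J) : J = ⊤ := by
  have := J.mul_mem_left (single 1 c⁻¹) hJ
  rwa [single_mul_single, mul_one, inv_mul_cancel₀ hc, ← one_def, ← Ideal.eq_top_iff_one] at this

theorem comap_mapDomainRingHom_eq_bot_of_inf_eq_bot {H X : Subgroup G}
    {I : Ideal (MonoidAlgebra k G)} (hI₁ : I ≠ ⊤)
    (hI : Ideal.map (mapDomainRingHom k H.subtype) (I.comap (mapDomainRingHom k H.subtype)) = I)
    (hX : X ⊓ H = ⊥) :
    I.comap (mapDomainRingHom k X.subtype) = ⊥ := by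
  refine (Submodule.eq_bot_iff _).2 fun a ha => ?_
  ext x
  by_contra hax
  have hmem := cosetComponent_mem_comap hI ha x
  rw [cosetComponent_mapDomain_of_inf_eq_bot hX] at hmem
  exact Ideal.comap_ne_top _ hI₁ (eq_top_of_single_one_mem hax hmem)

end DivisionRing

end MonoidAlgebra

theorem stmt_16 (k : Type*) [Field k] (G : Type*) [CommGroup G] (H X : Subgroup G)
    (I : Ideal (MonoidAlgebra k G)) (hproper : I ≠ ⊤)
    (hctrl : Ideal.map (MonoidAlgebra.mapDomainRingHom k H.subtype)
      (Ideal.comap (MonoidAlgebra.mapDomainRingHom k H.subtype) I) = I)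
    (hX : X ⊓ H = ⊥) :
    Ideal.comap (MonoidAlgebra.mapDomainRingHom k X.subtype) I = ⊥ ∧
    ∃ f : MonoidAlgebra k X →+* MonoidAlgebra k G ⧸ I, Function.Injective f := by
  have hker := MonoidAlgebra.comap_mapDomainRingHom_eq_bot_of_inf_eq_bot hproper hctrl hX
  refine ⟨hker, (Ideal.Quotient.mk I).comp (MonoidAlgebra.mapDomainRingHom k X.subtype), ?_⟩
  rw [RingHom.injective_iff_ker_eq_bot, ← RingHom.comap_ker, Ideal.mk_ker, hker]
end

section
/- Let G be an abelian group with torsion subgroup T and let H be a finitely generated subgroup of G. If the set of primes p for which T contains an element of order p is infinite, then there is a nontrivial subgroup X of T such that X ∩ H = 1. -/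
universe u v w

/-!
A finitely generated abelian group `H` has finite torsion subgroup, so only the finitely
many primes dividing its order occur as orders of elements of `H`. Hence some prime `p` is
the order of an element `x ∈ G` but of no element of `H`; every nontrivial element of `⟨x⟩`
has order `p`, so `X = ⟨x⟩` meets `H` trivially.
-/

open Subgroup

namespace CommGroup

variable {G : Type*} [CommGroup G]

theorem subgroup_fg [Group.FG G] (K : Subgroup G) : K.FG := by
  have : Module.Finite ℤ (Additive G) := Module.Finite.iff_addGroup_fg.mpr inferInstance
  have hK : (K.toAddSubgroup.toIntSubmodule : Submodule ℤ (Additive G)).FG :=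
    IsNoetherian.noetherian _
  rw [Submodule.fg_iff_addSubgroup_fg, AddSubgroup.toIntSubmodule_toAddSubgroup] at hK
  exact (Subgroup.fg_iff_add_fg K).2 hK

theorem finite_torsion [Group.FG G] : Finite (torsion G) := by
  have : Group.FG (torsion G) := (Group.fg_iff_subgroup_fg _).2 (subgroup_fg _)
  exact finite_of_fg_isMulTorsion _ fun x => Submonoid.isOfFinOrder_coe.1 x.2

theorem setOf_prime_orderOf_subset_primeFactors [Finite (torsion G)] :
    {p : ℕ | p.Prime ∧ ∃ x : G, orderOf x = p} ⊆ (Nat.card (torsion G)).primeFactors := by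
  rintro p ⟨hp, x, rfl⟩
  have hx : x ∈ torsion G := orderOf_pos_iff.1 hp.pos
  refine Nat.mem_primeFactors.2 ⟨hp, ?_, Nat.card_pos.ne'⟩
  rw [← orderOf_mk x hx]
  exact orderOf_dvd_natCard _

theorem finite_setOf_prime_orderOf [Group.FG G] :
    {p : ℕ | p.Prime ∧ ∃ x : G, orderOf x = p}.Finite :=
  have := finite_torsion (G := G)
  (Nat.card (torsion G)).primeFactors.finite_toSet.subset setOf_prime_orderOf_subset_primeFactors

end CommGroup

theorem Subgroup.zpowers_inf_eq_bot_of_orderOf_prime {G : Type*} [Group G] {x : G} {p : ℕ}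
    (hp : p.Prime) (hx : orderOf x = p) {H : Subgroup G} (hH : ∀ y : H, orderOf y ≠ p) :
    zpowers x ⊓ H = ⊥ := by
  refine eq_bot_iff.2 fun y ⟨hyx, hyH⟩ => mem_bot.2 ?_
  have hdvd : orderOf y ∣ p := hx ▸ orderOf_dvd_of_mem_zpowers hyx
  rcases hp.eq_one_or_self_of_dvd _ hdvd with h | h
  · exact orderOf_eq_one_iff.1 h
  · exact absurd (orderOf_mk y hyH ▸ h) (hH ⟨y, hyH⟩)

theorem stmt_17 (G : Type*) [CommGroup G] (H : Subgroup G) (hH : H.FG)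
    (hinf : {p : ℕ | p.Prime ∧ ∃ x : G, orderOf x = p}.Infinite) :
    ∃ X : Subgroup G, X ≠ ⊥ ∧ X ≤ CommGroup.torsion G ∧ X ⊓ H = ⊥ := by
  have : Group.FG H := (Group.fg_iff_subgroup_fg H).2 hH
  obtain ⟨p, ⟨hp, x, hx⟩, hpH⟩ :=
    (hinf.sdiff (CommGroup.finite_setOf_prime_orderOf (G := H))).nonempty
  have hxfin : IsOfFinOrder x := orderOf_pos_iff.1 (hx ▸ hp.pos)
  refine ⟨zpowers x, ?_, zpowers_le.2 hxfin, ?_⟩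
  · rw [Ne, zpowers_eq_bot]
    rintro rfl
    exact hp.ne_one (hx.symm.trans orderOf_one)
  · exact zpowers_inf_eq_bot_of_orderOf_prime hp hx fun y hy => hpH ⟨hp, y, hy⟩
end

section
/- Let G be an abelian group with torsion subgroup T and let H be a finitely generated subgroup of G. If the torsion-free quotient group G/T does not have finite Prüfer rank (i.e. for every m there is a finitely generated subgroup of G/T that cannot be generated by m elements), then there is a subgroup Y of G which is free abelian of countably infinite rank such that Y ∩ H = 1. -/
universe u v w

/-! The torsion-free group `G/T` has infinite `ℤ`-rank, because in a torsion-free group of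
finite rank `r` every finitely generated subgroup is free of rank at most `r`. Hence modulo any
finitely generated subgroup of `G/T` some element still has infinite order, and one can choose
`a₀, a₁, …` in `G/T` with each `aₙ` of infinite order modulo `⟨H̄, a₀, …, aₙ₋₁⟩`, where `H̄` is
the image of `H`. Lifts of the `aₙ` to `G` generate a free abelian group of countable rank
meeting `H` trivially: a nontrivial relation modulo `H` would, in `G/T`, put a nonzero multiple
of the last `aₙ` involved into `⟨H̄, a₀, …, aₙ₋₁⟩`. -/

open Cardinal

theorem Submodule.FG.exists_forall_smul_notMem {R M : Type*} [CommRing R] [IsDomain R]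
    [AddCommGroup M] [Module R M] {p : Submodule R M} (hp : p.FG)
    (hM : ℵ₀ ≤ Module.rank R M) :
    ∃ a : M, ∀ r : R, r ≠ 0 → r • a ∉ p := by
  by_contra! h
  have htors : Module.IsTorsion R (M ⧸ p) := by
    rintro ⟨a⟩
    obtain ⟨r, hr, hra⟩ := h a
    exact ⟨⟨r, mem_nonZeroDivisors_of_ne_zero hr⟩, (Submodule.Quotient.mk_eq_zero p).2 hra⟩
  have : Module.Finite R p := Module.Finite.iff_fg.2 hp
  refine hM.not_gt ?_
  rw [← rank_quotient_add_rank_of_isDomain p, Module.rank_eq_zero_iff_isTorsion.2 htors,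
    zero_add]
  exact Module.rank_lt_aleph0 R p

theorem exists_seq_comap_linearCombination_eq_bot {R M : Type*} [Ring R] [AddCommGroup M]
    [Module R M] (h : ∀ p : Submodule R M, p.FG → ∃ a : M, ∀ r : R, r ≠ 0 → r • a ∉ p)
    {p : Submodule R M} (hp : p.FG) :
    ∃ a : ℕ → M, p.comap (Finsupp.linearCombination R a) = ⊥ := by
  choose f hf using h
  let P : ℕ → {q : Submodule R M // q.FG} := fun n =>
    Nat.rec ⟨p, hp⟩
      (fun _ q => ⟨q.1 ⊔ R ∙ f q.1 q.2, q.2.sup (Submodule.fg_span_singleton _)⟩) n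
  let a : ℕ → M := fun n => f (P n).1 (P n).2
  have hmono : Monotone fun n => (P n).1 := monotone_nat_of_le_succ fun n => le_sup_left
  have ha : ∀ i n, i < n → a i ∈ (P n).1 := fun i n hin =>
    hmono hin (le_sup_right (a := (P i).1) (Submodule.mem_span_singleton_self (a i)))
  refine ⟨a, eq_bot_iff.2 fun c hc => ?_⟩
  rw [Submodule.mem_comap] at hc
  rw [Submodule.mem_bot]
  induction c using Finsupp.induction_on_max with
  | zero => rfl
  | single_add n r c hlt hr _ =>
    refine absurd (?_ : r • a n ∈ (P n).1) (hf _ _ r hr)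
    have hrest : Finsupp.linearCombination R a c ∈ (P n).1 :=
      Submodule.sum_mem _ fun i hi => Submodule.smul_mem _ _ (ha i n (hlt i hi))
    have hall : Finsupp.linearCombination R a (Finsupp.single n r + c) ∈ (P n).1 :=
      hmono (Nat.zero_le n) hc
    rw [map_add, Finsupp.linearCombination_single] at hall
    simpa using Submodule.sub_mem _ hall hrest

theorem Subgroup.FG.toIntSubmodule {Q : Type*} [CommGroup Q] {S : Subgroup Q} (hS : S.FG) :
    S.toAddSubgroup.toIntSubmodule.FG :=
  (Submodule.fg_iff_addSubgroup_fg _).2 ((Subgroup.fg_iff_add_fg S).1 hS)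

theorem Subgroup.closure_toMul_image_eq_of_span_eq {Q : Type*} [CommGroup Q] {S : Subgroup Q}
    {s : Set (Additive Q)} (h : Submodule.span ℤ s = S.toAddSubgroup.toIntSubmodule) :
    Subgroup.closure (Additive.toMul '' s) = S := by
  apply Subgroup.toAddSubgroup.injective
  apply AddSubgroup.toIntSubmodule.injective
  rw [Subgroup.toAddSubgroup_closure, Equiv.preimage_image, AddSubgroup.toIntSubmodule_closure, h]

theorem HasFinitePruferRank.of_rank_lt_aleph0 {Q : Type*} [CommGroup Q] [IsMulTorsionFree Q]
    (h : Module.rank ℤ (Additive Q) < ℵ₀) : HasFinitePruferRank Q := by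
  classical
  refine ⟨Module.finrank ℤ (Additive Q), fun S hS => ?_⟩
  let S' := S.toAddSubgroup.toIntSubmodule
  have : Module.Finite ℤ S' := Module.Finite.iff_fg.2 hS.toIntSubmodule
  let b := Module.Free.chooseBasis ℤ S'
  let t : Finset Q := Finset.univ.image fun i => Additive.toMul (b i : Additive Q)
  have ht : (t : Set Q) = Additive.toMul '' Set.range (S'.subtype ∘ b) := by
    rw [Finset.coe_image, Finset.coe_univ, Set.image_univ, ← Set.range_comp]; rfl
  refine ⟨t, ?_, ?_, ht ▸ Subgroup.closure_toMul_image_eq_of_span_eq ?_⟩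
  · simp only [t, Finset.coe_image, Finset.coe_univ, Set.image_univ, Set.range_subset_iff]
    exact fun i => (b i).2
  · calc t.card ≤ Fintype.card (Module.Free.ChooseBasisIndex ℤ S') := Finset.card_image_le
      _ = Module.finrank ℤ S' := (Module.finrank_eq_card_chooseBasisIndex ℤ S').symm
      _ ≤ Module.finrank ℤ (Additive Q) :=
        Module.finrank_le_finrank_of_rank_le_rank (by simpa using S'.rank_le) h
  · rw [Set.range_comp, ← Submodule.map_span, b.span_eq, Submodule.map_top,
      Submodule.range_subtype]

theorem Submodule.comap_linearCombination_eq_bot_of_comp {R M N ι : Type*} [Semiring R]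
    [AddCommMonoid M] [AddCommMonoid N] [Module R M] [Module R N] (f : M →ₗ[R] N) (b : ι → M)
    {q : Submodule R M} (h : (q.map f).comap (Finsupp.linearCombination R (f ∘ b)) = ⊥) :
    q.comap (Finsupp.linearCombination R b) = ⊥ :=
  eq_bot_iff.2 fun c hc => h ▸ by
    simpa [Finsupp.apply_linearCombination] using Submodule.mem_map_of_mem (f := f) hc

theorem Subgroup.exists_addEquiv_inf_eq_bot {G M : Type*} [CommGroup G] [AddCommGroup M]
    (H : Subgroup G) (F : M →+ Additive G) (hF : ∀ c, (F c).toMul ∈ H → c = 0) :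
    ∃ Y : Subgroup G, Nonempty (Additive Y ≃+ M) ∧ Y ⊓ H = ⊥ := by
  let F' : Multiplicative M →* G := AddMonoidHom.toMultiplicativeLeft F
  have hinj : Function.Injective F' := (injective_iff_map_eq_one F').2 fun c hc =>
    congrArg Multiplicative.ofAdd (hF c.toAdd (hc ▸ H.one_mem))
  refine ⟨F'.range, ⟨MulEquiv.toAdditiveLeft (MonoidHom.ofInjective hinj).symm⟩, ?_⟩
  rw [eq_bot_iff]
  rintro _ ⟨⟨c, rfl⟩, hc⟩
  rw [show c = 1 from congrArg Multiplicative.ofAdd (hF c.toAdd hc), map_one]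
  exact Subgroup.one_mem _

theorem stmt_18 (G : Type*) [CommGroup G] (H : Subgroup G) (hH : H.FG)
    (hrank : ¬ HasFinitePruferRank (G ⧸ CommGroup.torsion G)) :
    ∃ Y : Subgroup G, Nonempty (Additive Y ≃+ (ℕ →₀ ℤ)) ∧ Y ⊓ H = ⊥ := by
  let π : Additive G →ₗ[ℤ] Additive (G ⧸ CommGroup.torsion G) :=
    (QuotientGroup.mk' (CommGroup.torsion G)).toAdditive.toIntLinearMap
  let q := H.toAddSubgroup.toIntSubmodule
  have hq : (q.map π).FG := hH.toIntSubmodule.map π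
  have hrk : ℵ₀ ≤ Module.rank ℤ (Additive (G ⧸ CommGroup.torsion G)) :=
    not_lt.1 (mt HasFinitePruferRank.of_rank_lt_aleph0 hrank)
  obtain ⟨a, ha⟩ :=
    exists_seq_comap_linearCombination_eq_bot (fun p hp => hp.exists_forall_smul_notMem hrk) hq
  have hπ : Function.Surjective π := QuotientGroup.mk'_surjective (G := G) _
  obtain ⟨b, rfl⟩ := hπ.comp_left a
  have hb := Submodule.comap_linearCombination_eq_bot_of_comp π b ha
  exact H.exists_addEquiv_inf_eq_bot (Finsupp.linearCombination ℤ b).toAddMonoidHom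
    fun c hc => (Submodule.mem_bot ℤ).1 (hb ▸ hc)
end
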